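/- arXiv:math/0608270 — 3 statements merged into one kernel-verified Lean document; each statement's English description precedes it below -/
import Mathlib

section
/- Suppose |A| ≥ 3. Every map C : LPO_A^I → LPO_A satisfying unanimity and independence of irrelevant alternatives is the lexicographic voting rule Lex_π for a unique finite sequence π = (k_1,...,k_ℓ) of distinct elements of I: a ≈ b iff all k_λ are indifferent between a and b; otherwise, letting k be the first element of the sequence not indifferent, a ≻ b iff a ≻_k b, and b ≻ a iff b ≻_k a. -/
variable {A I : Type*}

/-- A partial preorder: a reflexive and transitive binary relation. -/
def IsPPO (P : A → A → Prop) : Prop := Reflexive P ∧ Transitive P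

/-- A linear (total) preorder: reflexive, transitive and complete. -/
def IsLPO (P : A → A → Prop) : Prop := Reflexive P ∧ Transitive P ∧ ∀ a b, P a b ∨ P b a

/-- A profile of partial preorders. -/
def IsPPOProfile (P : I → A → A → Prop) : Prop := ∀ i, IsPPO (P i)

/-- A profile of linear (total) preorders. -/
def IsLPOProfile (P : I → A → A → Prop) : Prop := ∀ i, IsLPO (P i)

/-- Strict preference. -/
def StrictPref (P : A → A → Prop) (a b : A) : Prop := P a b ∧ ¬ P b a

/-- Indifference. -/
def Indiff (P : A → A → Prop) (a b : A) : Prop := P a b ∧ P b a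

/-- The set `A` contains at least three distinct alternatives. -/
def ThreeAlts (A : Type*) : Prop := ∃ a b c : A, a ≠ b ∧ b ≠ c ∧ a ≠ c

/-- Unanimity. -/
def Unanimity (C : (I → A → A → Prop) → A → A → Prop) : Prop :=
  ∀ P, IsPPOProfile P → ∀ a b : A, (∀ i, P i a b) → C P a b

/-- Independence of irrelevant alternatives. -/
def IIA (C : (I → A → A → Prop) → A → A → Prop) : Prop :=
  ∀ P P' : I → A → A → Prop, IsPPOProfile P → IsPPOProfile P' → ∀ a b : A,
    {i | P i a b} = {i | P' i a b} → {i | P i b a} = {i | P' i b a} →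
    (C P a b ↔ C P' a b)

/-- Neutrality: `C (ρ*P) = ρ*(C P)` for every permutation `ρ` of the alternatives. -/
def Neutrality (C : (I → A → A → Prop) → A → A → Prop) : Prop :=
  ∀ (ρ : Equiv.Perm A) (P : I → A → A → Prop), IsPPOProfile P →
    ∀ x y : A, C (fun i a b => P i (ρ.symm a) (ρ.symm b)) x y ↔ C P (ρ.symm x) (ρ.symm y)

/-- Monotonicity. -/
def Monotonicity (C : (I → A → A → Prop) → A → A → Prop) : Prop :=
  ∀ P P' : I → A → A → Prop, IsPPOProfile P → IsPPOProfile P' → ∀ a b : A,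
    {i | P i a b} ⊆ {i | P' i a b} → {i | P' i b a} ⊆ {i | P i b a} →
    C P a b → C P' a b

/-- `J` is a decisive set: unanimous strict preference on `J` forces weak aggregate preference. -/
def Decisive (C : (I → A → A → Prop) → A → A → Prop) (J : Set I) : Prop :=
  ∀ P, IsPPOProfile P → ∀ a b : A, (∀ j ∈ J, StrictPref (P j) a b) → C P a b

/-- `J` is a strongly decisive set: unanimous weak preference on `J` forces weak aggregate preference. -/
def SDecisive (C : (I → A → A → Prop) → A → A → Prop) (J : Set I) : Prop :=
  ∀ P, IsPPOProfile P → ∀ a b : A, (∀ j ∈ J, P j a b) → C P a b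

/-- The lexicographic voting rule associated to a finite sequence of voters. -/
def LexRule : List I → (I → A → A → Prop) → A → A → Prop
  | [], _, _, _ => True
  | k :: rest, P, a, b =>
      (Indiff (P k) a b ∧ LexRule rest P a b) ∨ (¬ Indiff (P k) a b ∧ P k a b)

namespace RefinedArrow

lemma third_elt (hA : ThreeAlts A) (a b : A) : ∃ c : A, c ≠ a ∧ c ≠ b := by
  obtain ⟨p, q, r, hpq, hqr, hpr⟩ := hA
  by_contra h
  push_neg at h
  rcases eq_or_ne p a with h1 | h1
  · rcases eq_or_ne q a with h2 | h2
    · exact hpq (h1.trans h2.symm)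
    · rcases eq_or_ne r a with h3 | h3
      · exact hpr (h1.trans h3.symm)
      · exact hqr ((h q h2).trans (h r h3).symm)
  · rcases eq_or_ne q a with h2 | h2
    · rcases eq_or_ne r a with h3 | h3
      · exact hqr (h2.trans h3.symm)
      · exact hpr ((h p h1).trans (h r h3).symm)
    · exact hpq ((h p h1).trans (h q h2).symm)

def mkP (f : I → A → ℕ) : I → A → A → Prop := fun i x y => f i y ≤ f i x

lemma mkP_lpo (f : I → A → ℕ) : IsLPOProfile (mkP f) :=
  fun i => ⟨fun _ => le_refl _, fun _ _ _ h1 h2 => le_trans h2 h1,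
    fun a b => le_total (f i b) (f i a)⟩

lemma mkP_strict (f : I → A → ℕ) (i : I) (x y : A) :
    StrictPref (mkP f i) x y ↔ f i y < f i x :=
  ⟨fun h => lt_of_le_not_ge h.1 h.2, fun h => ⟨le_of_lt h, not_le.mpr h⟩⟩

lemma trivial_lpo : IsLPO (fun _ _ : A => True) :=
  ⟨fun _ => trivial, fun _ _ _ _ _ => trivial, fun _ _ => Or.inl trivial⟩

lemma strict_weak_trans {R : A → A → Prop} (h : IsLPO R) {a b c : A}
    (h1 : StrictPref R a b) (h2 : R b c) : StrictPref R a c :=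
  ⟨h.2.1 h1.1 h2, fun hca => h1.2 (h.2.1 h2 hca)⟩

lemma weak_strict_trans {R : A → A → Prop} (h : IsLPO R) {a b c : A}
    (h1 : R a b) (h2 : StrictPref R b c) : StrictPref R a c :=
  ⟨h.2.1 h1 h2.1, fun hca => h2.2 (h.2.1 hca h1)⟩

section Core
variable {C : (I → A → A → Prop) → A → A → Prop}

lemma iia_strict
    (hIIA : ∀ P P' : I → A → A → Prop, IsLPOProfile P → IsLPOProfile P' → ∀ a b : A,
      {i | P i a b} = {i | P' i a b} → {i | P i b a} = {i | P' i b a} → (C P a b ↔ C P' a b))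
    {P Q : I → A → A → Prop} (hP : IsLPOProfile P) (hQ : IsLPOProfile Q) {a b : A}
    (h1 : ∀ i, P i a b ↔ Q i a b) (h2 : ∀ i, P i b a ↔ Q i b a) :
    (C P a b ↔ C Q a b) ∧ (C P b a ↔ C Q b a) :=
  ⟨hIIA P Q hP hQ a b (Set.ext h1) (Set.ext h2), hIIA P Q hP hQ b a (Set.ext h2) (Set.ext h1)⟩

open Classical in
noncomputable def dFun (U : Set I) (a b : A) : I → A → ℕ := fun i x =>
  if x = a then (if i ∈ U then 1 else 0) else if x = b then (if i ∈ U then 0 else 1) else 0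

def dec (C : (I → A → A → Prop) → A → A → Prop) (U : Set I) (a b : A) : Prop :=
  StrictPref (C (mkP (dFun U a b))) a b

lemma dec_pattern
    (hIIA : ∀ P P' : I → A → A → Prop, IsLPOProfile P → IsLPOProfile P' → ∀ a b : A,
      {i | P i a b} = {i | P' i a b} → {i | P i b a} = {i | P' i b a} → (C P a b ↔ C P' a b))
    {U : Set I} {a b : A} (hab : a ≠ b)
    {P : I → A → A → Prop} (hP : IsLPOProfile P)
    (hin : ∀ i ∈ U, StrictPref (P i) a b) (hout : ∀ i ∉ U, StrictPref (P i) b a) :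
    StrictPref (C P) a b ↔ dec C U a b := by
  classical
  have fa : ∀ i, dFun U a b i a = if i ∈ U then 1 else 0 := fun i => by simp [dFun]
  have fb : ∀ i, dFun U a b i b = if i ∈ U then 0 else 1 := fun i => by
    simp [dFun, Ne.symm hab]
  have h1 : ∀ i, P i a b ↔ mkP (dFun U a b) i a b := by
    intro i
    show _ ↔ dFun U a b i b ≤ dFun U a b i a
    rw [fa, fb]
    by_cases hi : i ∈ U
    · simp [hi, (hin i hi).1]
    · simp [hi, (hout i hi).2]
  have h2 : ∀ i, P i b a ↔ mkP (dFun U a b) i b a := by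
    intro i
    show _ ↔ dFun U a b i a ≤ dFun U a b i b
    rw [fa, fb]
    by_cases hi : i ∈ U
    · simp [hi, (hin i hi).2]
    · simp [hi, (hout i hi).1]
  have e := iia_strict hIIA hP (mkP_lpo _) h1 h2
  exact and_congr e.1 (not_congr e.2)

variable (hC : ∀ P : I → A → A → Prop, IsLPOProfile P → IsLPO (C P))
variable (hU : ∀ P : I → A → A → Prop, IsLPOProfile P → ∀ a b : A, (∀ i, P i a b) → C P a b)
variable (hIIA : ∀ P P' : I → A → A → Prop, IsLPOProfile P → IsLPOProfile P' → ∀ a b : A,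
      {i | P i a b} = {i | P' i a b} → {i | P i b a} = {i | P' i b a} → (C P a b ↔ C P' a b))

include hC hU hIIA

lemma dec_exp1 {U : Set I} {a b c : A}
    (hab : a ≠ b) (hca : c ≠ a) (hcb : c ≠ b) (hd : dec C U a b) : dec C U a c := by
  classical
  set f : I → A → ℕ := fun i x =>
    if x = a then (if i ∈ U then 2 else 0)
    else if x = b then (if i ∈ U then 1 else 2)
    else if x = c then (if i ∈ U then 0 else 1) else 0 with hf
  have fa : ∀ i, f i a = if i ∈ U then 2 else 0 := fun i => by simp [hf]
  have fb : ∀ i, f i b = if i ∈ U then 1 else 2 := fun i => by simp [hf, Ne.symm hab]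
  have fc : ∀ i, f i c = if i ∈ U then 0 else 1 := fun i => by simp [hf, hca, hcb]
  have hP := mkP_lpo f
  have s1 : StrictPref (C (mkP f)) a b := by
    refine (dec_pattern hIIA hab hP ?_ ?_).mpr hd
    · intro i hi; rw [mkP_strict, fa, fb]; simp [hi]
    · intro i hi; rw [mkP_strict, fa, fb]; simp [hi]
  have w1 : C (mkP f) b c := hU _ hP b c (fun i => by
    show f i c ≤ f i b
    rw [fb, fc]; split <;> omega)
  have s2 : StrictPref (C (mkP f)) a c := strict_weak_trans (hC _ hP) s1 w1
  refine (dec_pattern hIIA (Ne.symm hca) hP ?_ ?_).mp s2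
  · intro i hi; rw [mkP_strict, fa, fc]; simp [hi]
  · intro i hi; rw [mkP_strict, fa, fc]; simp [hi]

lemma dec_exp2 {U : Set I} {a b c : A}
    (hab : a ≠ b) (hca : c ≠ a) (hcb : c ≠ b) (hd : dec C U a b) : dec C U c b := by
  classical
  set f : I → A → ℕ := fun i x =>
    if x = c then (if i ∈ U then 2 else 1)
    else if x = a then (if i ∈ U then 1 else 0)
    else if x = b then (if i ∈ U then 0 else 2) else 0 with hf
  have fa : ∀ i, f i a = if i ∈ U then 1 else 0 := fun i => by simp [hf, Ne.symm hca]
  have fb : ∀ i, f i b = if i ∈ U then 0 else 2 := fun i => by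
    simp [hf, Ne.symm hcb, Ne.symm hab]
  have fc : ∀ i, f i c = if i ∈ U then 2 else 1 := fun i => by simp [hf]
  have hP := mkP_lpo f
  have s1 : StrictPref (C (mkP f)) a b := by
    refine (dec_pattern hIIA hab hP ?_ ?_).mpr hd
    · intro i hi; rw [mkP_strict, fa, fb]; simp [hi]
    · intro i hi; rw [mkP_strict, fa, fb]; simp [hi]
  have w1 : C (mkP f) c a := hU _ hP c a (fun i => by
    show f i a ≤ f i c
    rw [fa, fc]; split <;> omega)
  have s2 : StrictPref (C (mkP f)) c b := weak_strict_trans (hC _ hP) w1 s1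
  refine (dec_pattern hIIA hcb hP ?_ ?_).mp s2
  · intro i hi; rw [mkP_strict, fb, fc]; simp [hi]
  · intro i hi; rw [mkP_strict, fb, fc]; simp [hi]

lemma dec_all (hA : ThreeAlts A) {U : Set I} {a b : A}
    (hab : a ≠ b) (hd : dec C U a b) : ∀ x y : A, x ≠ y → dec C U x y := by
  have step1 : ∀ {p q : A}, p ≠ q → dec C U p q → ∀ r, r ≠ p → dec C U p r := by
    intro p q hpq hd r hrp
    by_cases hrq : r = q
    · exact hrq ▸ hd
    · exact dec_exp1 hC hU hIIA hpq hrp hrq hd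
  have step2 : ∀ {p q : A}, p ≠ q → dec C U p q → ∀ r, r ≠ q → dec C U r q := by
    intro p q hpq hd r hrq
    by_cases hrp : r = p
    · exact hrp ▸ hd
    · exact dec_exp2 hC hU hIIA hpq hrp hrq hd
  have hba : dec C U b a := by
    obtain ⟨c, hca, hcb⟩ := third_elt hA a b
    have h1 : dec C U a c := step1 hab hd c hca
    have h2 : dec C U b c := step2 (Ne.symm hca) h1 b (Ne.symm hcb)
    exact step1 (Ne.symm hcb) h2 a hab
  intro x y hxy
  by_cases hxb : x = b
  · subst hxb
    exact step1 (Ne.symm hab) hba y (Ne.symm hxy)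
  · have hxB : dec C U x b := step2 hab hd x hxb
    exact step1 hxb hxB y (Ne.symm hxy)

lemma dec_univ (hA : ThreeAlts A) {P0 : I → A → A → Prop} (hP0 : IsLPOProfile P0)
    {a b : A} (hna : ¬ C P0 a b) : ∃ x y : A, x ≠ y ∧ dec C Set.univ x y := by
  classical
  have hab : a ≠ b := by rintro rfl; exact hna ((hC P0 hP0).1 a)
  obtain ⟨c, hca, hcb⟩ := third_elt hA a b
  set g : I → A → ℕ := fun i x =>
    if x = c then 2 else if x = a then (if P0 i a b then 1 else 0)
    else if x = b then (if P0 i b a then 1 else 0) else 0 with hg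
  have ga : ∀ i, g i a = if P0 i a b then 1 else 0 := fun i => by simp [hg, Ne.symm hca]
  have gb : ∀ i, g i b = if P0 i b a then 1 else 0 := fun i => by
    simp [hg, Ne.symm hcb, Ne.symm hab]
  have gc : ∀ i, g i c = 2 := fun i => by simp [hg]
  have hQ := mkP_lpo g
  have h1 : ∀ i, P0 i a b ↔ mkP g i a b := by
    intro i
    show _ ↔ g i b ≤ g i a
    rw [ga, gb]
    by_cases h : P0 i a b <;> by_cases h' : P0 i b a
    · simp [h, h']
    · simp [h, h']
    · simp [h, h']
    · exact absurd ((hP0 i).2.2 a b) (by simp [h, h'])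
  have h2 : ∀ i, P0 i b a ↔ mkP g i b a := by
    intro i
    show _ ↔ g i a ≤ g i b
    rw [ga, gb]
    by_cases h : P0 i a b <;> by_cases h' : P0 i b a
    · simp [h, h']
    · simp [h, h']
    · simp [h, h']
    · exact absurd ((hP0 i).2.2 a b) (by simp [h, h'])
  have e := iia_strict hIIA hP0 hQ h1 h2
  have hQba : StrictPref (C (mkP g)) b a := by
    refine ⟨e.2.mp (((hC P0 hP0).2.2 a b).resolve_left hna), fun h => hna (e.1.mpr h)⟩
  have w : C (mkP g) c b := hU _ hQ c b (fun i => by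
    show g i b ≤ g i c
    rw [gb, gc]; split <;> omega)
  have s : StrictPref (C (mkP g)) c a := weak_strict_trans (hC _ hQ) w hQba
  have hin : ∀ i ∈ (Set.univ : Set I), StrictPref (mkP g i) c a := fun i _ =>
    (mkP_strict g i c a).mpr (by rw [ga, gc]; split <;> omega)
  have hout : ∀ i ∉ (Set.univ : Set I), StrictPref (mkP g i) a c := fun i hi =>
    absurd (Set.mem_univ i) hi
  exact ⟨c, a, hca, (dec_pattern hIIA hca hQ hin hout).mp s⟩

omit hC hIIA in
lemma dec_empty {a b : A} (hab : a ≠ b) (hd : dec C (∅ : Set I) a b) : False := by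
  classical
  refine hd.2 (hU _ (mkP_lpo _) b a (fun i => ?_))
  show dFun (∅ : Set I) a b i a ≤ dFun (∅ : Set I) a b i b
  simp [dFun, Ne.symm hab]

omit hU in
lemma dec_split {a b c : A} (hab : a ≠ b) (hbc : b ≠ c) (hac : a ≠ c)
    {U : Set I} (V : Set I) (hVU : V ⊆ U) (hdU : dec C U a b) :
    dec C V a c ∨ dec C (U \ V) c b := by
  classical
  set f : I → A → ℕ := fun i x =>
    if i ∈ V then (if x = a then 2 else if x = b then 1 else 0)
    else if i ∈ U then (if x = c then 2 else if x = a then 1 else 0)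
    else (if x = b then 2 else if x = c then 1 else 0) with hf
  have fa : ∀ i, f i a = if i ∈ V then 2 else if i ∈ U then 1 else 0 := fun i => by
    simp [hf, hab, hac]
  have fb : ∀ i, f i b = if i ∈ V then 1 else if i ∈ U then 0 else 2 := fun i => by
    simp [hf, Ne.symm hab, hbc]
  have fc : ∀ i, f i c = if i ∈ V then 0 else if i ∈ U then 2 else 1 := fun i => by
    simp [hf, Ne.symm hac, Ne.symm hbc]
  have hP := mkP_lpo f
  have s1 : StrictPref (C (mkP f)) a b := by
    refine (dec_pattern hIIA hab hP ?_ ?_).mpr hdU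
    · intro i hi
      rw [mkP_strict, fa, fb]
      by_cases hv : i ∈ V <;> simp [hv, hi]
    · intro i hi
      have hv : i ∉ V := fun h => hi (hVU h)
      rw [mkP_strict, fa, fb]; simp [hv, hi]
  by_cases hco : C (mkP f) c a
  · right
    have s2 : StrictPref (C (mkP f)) c b := weak_strict_trans (hC _ hP) hco s1
    refine (dec_pattern hIIA (Ne.symm hbc) hP ?_ ?_).mp s2
    · rintro i ⟨hiU, hiV⟩
      rw [mkP_strict, fb, fc]; simp [hiU, hiV]
    · intro i hi
      rw [mkP_strict, fb, fc]
      by_cases hv : i ∈ V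
      · simp [hv]
      · have hu : i ∉ U := fun h => hi ⟨h, hv⟩
        simp [hv, hu]
  · left
    have hac' : C (mkP f) a c := ((hC _ hP).2.2 a c).resolve_right hco
    have s2 : StrictPref (C (mkP f)) a c := ⟨hac', hco⟩
    refine (dec_pattern hIIA hac hP ?_ ?_).mp s2
    · intro i hi
      rw [mkP_strict, fa, fc]; simp [hi]
    · intro i hi
      rw [mkP_strict, fa, fc]
      by_cases hu : i ∈ U <;> simp [hi, hu]

lemma exists_sdictator [Finite I] (hA : ThreeAlts A)
    {P0 : I → A → A → Prop} (hP0 : IsLPOProfile P0) {a0 b0 : A} (hna : ¬ C P0 a0 b0) :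
    ∃ k : I, ∀ x y : A, x ≠ y → dec C ({k} : Set I) x y := by
  classical
  obtain ⟨x0, y0, hxy0, hd0⟩ := dec_univ hC hU hIIA hA hP0 hna
  obtain ⟨p, q, r, hpq, hqr, hpr⟩ := hA
  have main : ∀ n (U : Set I), U.ncard ≤ n → (∀ x y : A, x ≠ y → dec C U x y) →
      ∃ k : I, ∀ x y : A, x ≠ y → dec C ({k} : Set I) x y := by
    intro n
    induction n with
    | zero =>
      intro U hcard hdec
      have hU0 : U = ∅ :=
        (Set.ncard_eq_zero (Set.toFinite U)).mp (Nat.le_zero.mp hcard)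
      exact absurd (hU0 ▸ hdec p q hpq) (fun h => dec_empty hU hpq h)
    | succ n ihn =>
      intro U hcard hdec
      rcases Set.eq_empty_or_nonempty U with h0 | ⟨k, hk⟩
      · exact absurd (h0 ▸ hdec p q hpq) (fun h => dec_empty hU hpq h)
      · rcases dec_split hC hIIA hpq hqr hpr ({k} : Set I)
          (Set.singleton_subset_iff.mpr hk) (hdec p q hpq) with h | h
        · exact ⟨k, dec_all hC hU hIIA ⟨p, q, r, hpq, hqr, hpr⟩ hpr h⟩
        · refine ihn (U \ {k}) ?_
            (dec_all hC hU hIIA ⟨p, q, r, hpq, hqr, hpr⟩ (Ne.symm hqr) h)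
          have h1 : (U \ {k}).ncard = U.ncard - 1 :=
            Set.ncard_diff_singleton_of_mem hk
          have h2 : 1 ≤ U.ncard := (Set.nonempty_iff_ne_empty.mp ⟨k, hk⟩ |> fun hne => Nat.one_le_iff_ne_zero.mpr (fun h0 => hne ((Set.ncard_eq_zero (Set.toFinite U)).mp h0)))
          omega
  exact main (Set.ncard (Set.univ : Set I)) Set.univ le_rfl
    (dec_all hC hU hIIA ⟨p, q, r, hpq, hqr, hpr⟩ hxy0 hd0)

lemma dictator_of_dec (hA : ThreeAlts A) {k : I}
    (hk : ∀ x y : A, x ≠ y → dec C ({k} : Set I) x y) :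
    ∀ P : I → A → A → Prop, IsLPOProfile P → ∀ a b : A,
      StrictPref (P k) a b → StrictPref (C P) a b := by
  classical
  intro P hP a b hs
  have hab : a ≠ b := by rintro rfl; exact hs.2 hs.1
  obtain ⟨c, hca, hcb⟩ := third_elt hA a b
  set g : I → A → ℕ := fun i x =>
    if i = k then (if x = a then 2 else if x = c then 1 else 0)
    else if x = c then 2 else if x = a then (if P i a b then 1 else 0)
    else if x = b then (if P i b a then 1 else 0) else 0 with hg
  have hQ := mkP_lpo g
  have gka : g k a = 2 := by simp [hg]
  have gkb : g k b = 0 := by simp [hg, Ne.symm hab, Ne.symm hcb]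
  have gkc : g k c = 1 := by simp [hg, hca]
  have goa : ∀ i, i ≠ k → g i a = (if P i a b then 1 else 0) := fun i hi => by
    simp [hg, hi, Ne.symm hca]
  have gob : ∀ i, i ≠ k → g i b = (if P i b a then 1 else 0) := fun i hi => by
    simp [hg, hi, Ne.symm hcb, Ne.symm hab]
  have goc : ∀ i, i ≠ k → g i c = 2 := fun i hi => by simp [hg, hi]
  have hin : ∀ i ∈ ({k} : Set I), StrictPref (mkP g i) a c := by
    rintro i (rfl : i = k)
    exact (mkP_strict g i a c).mpr (by rw [gka, gkc]; omega)
  have hout : ∀ i ∉ ({k} : Set I), StrictPref (mkP g i) c a := by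
    intro i hi
    have hik : i ≠ k := by simpa using hi
    exact (mkP_strict g i c a).mpr (by rw [goa i hik, goc i hik]; split <;> omega)
  have s1 : StrictPref (C (mkP g)) a c :=
    (dec_pattern hIIA (Ne.symm hca) hQ hin hout).mpr (hk a c (Ne.symm hca))
  have w1 : C (mkP g) c b := hU _ hQ c b (fun i => by
    show g i b ≤ g i c
    by_cases hik : i = k
    · subst hik; rw [gkb, gkc]; omega
    · rw [gob i hik, goc i hik]; split <;> omega)
  have s2 : StrictPref (C (mkP g)) a b := strict_weak_trans (hC _ hQ) s1 w1
  have h1 : ∀ i, mkP g i a b ↔ P i a b := by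
    intro i
    show g i b ≤ g i a ↔ _
    by_cases hik : i = k
    · subst hik; rw [gka, gkb]; simp [hs.1]
    · rw [goa i hik, gob i hik]
      by_cases h : P i a b <;> by_cases h' : P i b a
      · simp [h, h']
      · simp [h, h']
      · simp [h, h']
      · exact absurd ((hP i).2.2 a b) (by simp [h, h'])
  have h2 : ∀ i, mkP g i b a ↔ P i b a := by
    intro i
    show g i a ≤ g i b ↔ _
    by_cases hik : i = k
    · subst hik; rw [gka, gkb]; simp [hs.2]
    · rw [goa i hik, gob i hik]
      by_cases h : P i a b <;> by_cases h' : P i b a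
      · simp [h, h']
      · simp [h, h']
      · simp [h, h']
      · exact absurd ((hP i).2.2 a b) (by simp [h, h'])
  have e := iia_strict hIIA hQ hP h1 h2
  exact ⟨e.1.mp s2.1, fun h => s2.2 (e.2.mpr h)⟩

lemma arrow_dict [Finite I] (hA : ThreeAlts A)
    (hnt : ¬ ∀ P : I → A → A → Prop, IsLPOProfile P → ∀ a b : A, C P a b) :
    ∃ k : I, ∀ P : I → A → A → Prop, IsLPOProfile P → ∀ a b : A,
      StrictPref (P k) a b → StrictPref (C P) a b := by
  push_neg at hnt
  obtain ⟨P0, hP0, a0, b0, hna⟩ := hnt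
  obtain ⟨k, hk⟩ := exists_sdictator hC hU hIIA hA hP0 hna
  exact ⟨k, dictator_of_dec hC hU hIIA hA hk⟩

end Core

lemma lexRule_congr {l : List I} {P Q : I → A → A → Prop} (h : ∀ i ∈ l, P i = Q i) :
    ∀ a b : A, LexRule l P a b ↔ LexRule l Q a b := by
  induction l with
  | nil => intro a b; exact Iff.rfl
  | cons k r ih =>
    intro a b
    have hk : P k = Q k := h k List.mem_cons_self
    have ihr := ih (fun i hi => h i (List.mem_cons_of_mem _ hi)) a b
    simp only [LexRule]
    rw [hk, ihr]

lemma lexRule_map {k : I} (l : List {i : I // i ≠ k}) (P : I → A → A → Prop) :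
    ∀ a b : A, LexRule (l.map Subtype.val) P a b ↔ LexRule l (fun i' => P i'.1) a b := by
  induction l with
  | nil => intro a b; exact Iff.rfl
  | cons j r ih =>
    intro a b
    simp only [List.map_cons, LexRule]
    rw [ih a b]

open Classical in
noncomputable def extProf (k : I) (Q : {i : I // i ≠ k} → A → A → Prop) :
    I → A → A → Prop :=
  fun i => if h : i = k then (fun _ _ => True) else Q ⟨i, h⟩

lemma extProf_self (k : I) (Q : {i : I // i ≠ k} → A → A → Prop) :
    extProf k Q k = fun _ _ => True := dif_pos rfl

lemma extProf_ne (k : I) (Q : {i : I // i ≠ k} → A → A → Prop) {i : I} (h : i ≠ k) :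
    extProf k Q i = Q ⟨i, h⟩ := dif_neg h

lemma extProf_lpo {k : I} {Q : {i : I // i ≠ k} → A → A → Prop}
    (hQ : IsLPOProfile Q) : IsLPOProfile (extProf k Q) := by
  intro i
  by_cases h : i = k
  · subst h; rw [extProf_self]; exact trivial_lpo
  · rw [extProf_ne k Q h]; exact hQ _

universe u v

lemma lex_exists {B : Type u} (hA : ThreeAlts B) :
    ∀ (n : ℕ) (J : Type v) [Fintype J] (C : (J → B → B → Prop) → B → B → Prop),
      Fintype.card J ≤ n →
      (∀ P, IsLPOProfile P → IsLPO (C P)) →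
      (∀ P, IsLPOProfile P → ∀ a b : B, (∀ i, P i a b) → C P a b) →
      (∀ P P' : J → B → B → Prop, IsLPOProfile P → IsLPOProfile P' → ∀ a b : B,
        {i | P i a b} = {i | P' i a b} → {i | P i b a} = {i | P' i b a} →
        (C P a b ↔ C P' a b)) →
      ∃ π : List J, π.Nodup ∧
        ∀ P, IsLPOProfile P → ∀ a b : B, (C P a b ↔ LexRule π P a b) := by
  intro n
  induction n with
  | zero =>
    intro J _ C hcard hC hU hIIA
    have hempty : IsEmpty J := Fintype.card_eq_zero_iff.mp (Nat.le_zero.mp hcard)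
    refine ⟨[], List.nodup_nil, fun P hP a b => ?_⟩
    exact iff_of_true (hU P hP a b (fun i => (hempty.false i).elim)) trivial
  | succ n ih =>
    intro J _ C hcard hC hU hIIA
    classical
    by_cases htriv : ∀ P : J → B → B → Prop, IsLPOProfile P → ∀ a b : B, C P a b
    · exact ⟨[], List.nodup_nil, fun P hP a b => iff_of_true (htriv P hP a b) trivial⟩
    obtain ⟨k, hk⟩ := arrow_dict hC hU hIIA hA htriv
    set C' : ({i : J // i ≠ k} → B → B → Prop) → B → B → Prop :=
      fun Q => C (extProf k Q) with hC'def
    have hC' : ∀ Q, IsLPOProfile Q → IsLPO (C' Q) := fun Q hQ => hC _ (extProf_lpo hQ)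
    have hU' : ∀ Q, IsLPOProfile Q → ∀ a b : B, (∀ i', Q i' a b) → C' Q a b := by
      intro Q hQ a b h
      refine hU _ (extProf_lpo hQ) a b fun i => ?_
      by_cases hik : i = k
      · subst hik; rw [extProf_self]; trivial
      · rw [extProf_ne k Q hik]; exact h _
    have hIIA' : ∀ Q Q' : {i : J // i ≠ k} → B → B → Prop,
        IsLPOProfile Q → IsLPOProfile Q' → ∀ a b : B,
        {i | Q i a b} = {i | Q' i a b} → {i | Q i b a} = {i | Q' i b a} →
        (C' Q a b ↔ C' Q' a b) := by
      intro Q Q' hQ hQ' a b h1 h2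
      refine hIIA _ _ (extProf_lpo hQ) (extProf_lpo hQ') a b ?_ ?_
      · ext i
        by_cases hik : i = k
        · subst hik; simp [Set.mem_setOf_eq, extProf_self]
        · simp only [Set.mem_setOf_eq, extProf_ne k _ hik]
          exact Set.ext_iff.mp h1 ⟨i, hik⟩
      · ext i
        by_cases hik : i = k
        · subst hik; simp [Set.mem_setOf_eq, extProf_self]
        · simp only [Set.mem_setOf_eq, extProf_ne k _ hik]
          exact Set.ext_iff.mp h2 ⟨i, hik⟩
    have hcard' : Fintype.card {i : J // i ≠ k} ≤ n := by
      have hlt : Fintype.card {i : J // i ≠ k} < Fintype.card J :=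
        Fintype.card_subtype_lt (x := k) (by simp)
      omega
    obtain ⟨l, hlnd, hl⟩ := ih {i : J // i ≠ k} C' hcard' hC' hU' hIIA'
    refine ⟨k :: l.map Subtype.val, ?_, ?_⟩
    · refine List.nodup_cons.mpr ⟨?_, hlnd.map Subtype.val_injective⟩
      simp only [List.mem_map]
      rintro ⟨j, _, hj⟩
      exact j.2 hj
    · intro P hP a b
      by_cases hab1 : P k a b <;> by_cases hab2 : P k b a
      · -- k indifferent between a and b
        set Q : {i : J // i ≠ k} → B → B → Prop := fun i' => P i'.1 with hQdef
        have hQ : IsLPOProfile Q := fun i' => hP i'.1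
        have e1 : C P a b ↔ C' Q a b := by
          refine hIIA P (extProf k Q) hP (extProf_lpo hQ) a b ?_ ?_
          · ext i
            by_cases hik : i = k
            · subst hik; simp [Set.mem_setOf_eq, extProf_self, hab1]
            · simp only [Set.mem_setOf_eq, extProf_ne k _ hik]; exact Iff.rfl
          · ext i
            by_cases hik : i = k
            · subst hik; simp [Set.mem_setOf_eq, extProf_self, hab2]
            · simp only [Set.mem_setOf_eq, extProf_ne k _ hik]; exact Iff.rfl
        have e2 : C' Q a b ↔ LexRule l Q a b := hl Q hQ a b
        have e3 : LexRule l Q a b ↔ LexRule (l.map Subtype.val) P a b :=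
          (lexRule_map l P a b).symm
        have hind : Indiff (P k) a b := ⟨hab1, hab2⟩
        rw [e1, e2, e3]
        simp only [LexRule]
        simp [hind]
      · -- k strictly prefers a to b
        have hs := hk P hP a b ⟨hab1, hab2⟩
        refine iff_of_true hs.1 ?_
        simp only [LexRule]
        exact Or.inr ⟨fun h => hab2 h.2, hab1⟩
      · -- k strictly prefers b to a
        have hs := hk P hP b a ⟨hab2, hab1⟩
        refine iff_of_false hs.2 ?_
        simp only [LexRule]
        rintro (⟨⟨h, _⟩, _⟩ | ⟨_, h⟩) <;> exact hab1 h
      · exact absurd ((hP k).2.2 a b) (by simp [hab1, hab2])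

lemma lex_unique {a b : A} (hab : a ≠ b) :
    ∀ (π ρ : List I), π.Nodup → ρ.Nodup →
      (∀ P : I → A → A → Prop, IsLPOProfile P → ∀ x y : A,
        LexRule π P x y ↔ LexRule ρ P x y) →
      π = ρ := by
  classical
  have keyP : ∀ (k : I) (r : List I), ∃ P : I → A → A → Prop,
      IsLPOProfile P ∧ ¬ LexRule (k :: r) P a b := by
    intro k r
    refine ⟨mkP (fun i x => if i = k ∧ x = b then 1 else 0), mkP_lpo _, ?_⟩
    have hkab : ¬ mkP (fun i x => if i = k ∧ x = b then 1 else 0) k a b := by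
      show ¬ ((if k = k ∧ b = b then 1 else 0) ≤ (if k = k ∧ a = b then 1 else 0))
      simp [hab]
    intro hL
    simp only [LexRule] at hL
    rcases hL with ⟨⟨h, _⟩, _⟩ | ⟨_, h⟩ <;> exact hkab h
  intro π
  induction π with
  | nil =>
    intro ρ _ _ hiff
    cases ρ with
    | nil => rfl
    | cons k r =>
      obtain ⟨P, hP, hn⟩ := keyP k r
      exact absurd ((hiff P hP a b).mp trivial) hn
  | cons k r ihr =>
    intro ρ hπnd hρnd hiff
    cases ρ with
    | nil =>
      obtain ⟨P, hP, hn⟩ := keyP k r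
      exact absurd ((hiff P hP a b).mpr trivial) hn
    | cons k' r' =>
      have hkk : k = k' := by
        by_contra hne
        set P : I → A → A → Prop := mkP (fun i x => if x = b then (if i = k then 1 else 0)
          else if x = a then (if i = k then 0 else 1) else 0) with hPd
        have hP := mkP_lpo (fun i x => if x = b then (if i = k then 1 else 0)
          else if x = a then (if i = k then 0 else 1) else 0)
        have hkab : ¬ P k a b := by
          show ¬ ((if b = b then (if k = k then 1 else 0)
            else if b = a then (if k = k then 0 else 1) else 0) ≤
            (if a = b then (if k = k then 1 else 0)
            else if a = a then (if k = k then 0 else 1) else 0))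
          simp [hab]
        have h1 : ¬ LexRule (k :: r) P a b := by
          intro hL
          simp only [LexRule] at hL
          rcases hL with ⟨⟨h, _⟩, _⟩ | ⟨_, h⟩ <;> exact hkab h
        have hk'ab : P k' a b := by
          show (if b = b then (if k' = k then 1 else 0)
            else if b = a then (if k' = k then 0 else 1) else 0) ≤
            (if a = b then (if k' = k then 1 else 0)
            else if a = a then (if k' = k then 0 else 1) else 0)
          simp [hab, Ne.symm hne]
        have hk'ba : ¬ P k' b a := by
          show ¬ ((if a = b then (if k' = k then 1 else 0)
            else if a = a then (if k' = k then 0 else 1) else 0) ≤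
            (if b = b then (if k' = k then 1 else 0)
            else if b = a then (if k' = k then 0 else 1) else 0))
          simp [hab, Ne.symm hne]
        have h2 : LexRule (k' :: r') P a b := by
          simp only [LexRule]
          exact Or.inr ⟨fun h => hk'ba h.2, hk'ab⟩
        exact h1 ((hiff P hP a b).mpr h2)
      subst hkk
      have hk_r : k ∉ r := (List.nodup_cons.mp hπnd).1
      have hk_r' : k ∉ r' := (List.nodup_cons.mp hρnd).1
      have hrr : ∀ P : I → A → A → Prop, IsLPOProfile P → ∀ x y : A,
          LexRule r P x y ↔ LexRule r' P x y := by
        intro Q hQ x y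
        set P : I → A → A → Prop := fun i => if i = k then (fun _ _ => True) else Q i with hPd
        have hP : IsLPOProfile P := by
          intro i
          by_cases hik : i = k
          · simp only [hPd, if_pos hik]; exact trivial_lpo
          · simp only [hPd, if_neg hik]; exact hQ i
        have hPk : P k = fun _ _ => True := by simp [hPd]
        have hcong : ∀ l : List I, k ∉ l → ∀ u v : A, LexRule l P u v ↔ LexRule l Q u v := by
          intro l hkl u v
          refine lexRule_congr (fun i hi => ?_) u v
          have hik : i ≠ k := fun h => hkl (h ▸ hi)
          simp [hPd, hik]
        have e1 : LexRule (k :: r) P x y ↔ LexRule r P x y := by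
          simp [LexRule, hPk, Indiff]
        have e2 : LexRule (k :: r') P x y ↔ LexRule r' P x y := by
          simp [LexRule, hPk, Indiff]
        calc LexRule r Q x y ↔ LexRule r P x y := (hcong r hk_r x y).symm
          _ ↔ LexRule (k :: r) P x y := e1.symm
          _ ↔ LexRule (k :: r') P x y := hiff P hP x y
          _ ↔ LexRule r' P x y := e2
          _ ↔ LexRule r' Q x y := hcong r' hk_r' x y
      rw [ihr r' (List.nodup_cons.mp hπnd).2 (List.nodup_cons.mp hρnd).2 hrr]

end RefinedArrow

theorem refined_arrow_dictator [Fintype I]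
    (C : (I → A → A → Prop) → A → A → Prop)
    (hA : ThreeAlts A)
    (hC : ∀ P, IsLPOProfile P → IsLPO (C P))
    (hU : ∀ P, IsLPOProfile P → ∀ a b : A, (∀ i, P i a b) → C P a b)
    (hIIA : ∀ P P' : I → A → A → Prop, IsLPOProfile P → IsLPOProfile P' → ∀ a b : A,
      {i | P i a b} = {i | P' i a b} → {i | P i b a} = {i | P' i b a} →
      (C P a b ↔ C P' a b)) :
    ∃! π : List I, π.Nodup ∧
      ∀ P : I → A → A → Prop, IsLPOProfile P → ∀ a b : A, (C P a b ↔ LexRule π P a b) := by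
  obtain ⟨π, hπnd, hπ⟩ :=
    RefinedArrow.lex_exists hA (Fintype.card I) I C le_rfl hC hU hIIA
  obtain ⟨a, b, _c, hab, _, _⟩ := hA
  refine ⟨π, ⟨hπnd, hπ⟩, ?_⟩
  rintro ρ ⟨hρnd, hρ⟩
  exact RefinedArrow.lex_unique hab ρ π hρnd hπnd
    (fun P hP x y => (hρ P hP x y).symm.trans (hπ P hP x y))
end

section
/- Suppose |A| ≥ 3 and I is finite of size n. There are exactly n! voting systems C : LPO_A^I → LPO_A satisfying strong unanimity and independence of irrelevant alternatives, namely the lexicographic rules Lex_π where π ranges over permutations of I. -/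
variable {A I : Type*}

/-- The set of profiles of linear (total) preorders. -/
def LProf (A I : Type*) := {P : I → A → A → Prop // ∀ i : I, IsLPO (P i)}

section Aux

open Classical

variable {A I : Type*}

/-- helper: strict ∘ weak ⊆ strict for a transitive relation. -/
lemma strict_weak_trans {P : A → A → Prop} (ht : Transitive P) {a b c : A}
    (h1 : StrictPref P a b) (h2 : P b c) : StrictPref P a c :=
  ⟨ht h1.1 h2, fun hca => h1.2 (ht h2 hca)⟩

lemma weak_strict_trans {P : A → A → Prop} (ht : Transitive P) {a b c : A}
    (h1 : P a b) (h2 : StrictPref P b c) : StrictPref P a c :=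
  ⟨ht h1 h2.1, fun hca => h2.2 (ht hca h1)⟩

lemma weak_of_not_strict {P : A → A → Prop} (h : IsLPO P) {a b : A}
    (hn : ¬ StrictPref P a b) : P b a := by
  by_cases hba : P b a
  · exact hba
  · rcases h.2.2 a b with hab | hba'
    · exact absurd ⟨hab, hba⟩ hn
    · exact hba'

lemma strictpref_ne {P : A → A → Prop} (h : Reflexive P) {a b : A}
    (hs : StrictPref P a b) : a ≠ b := by
  rintro rfl; exact hs.2 (h a)

/-- low-level rank-based relation -/
def rkP (r : A → ℕ) : A → A → Prop := fun x y => r y ≤ r x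

lemma rkP_lpo (r : A → ℕ) : IsLPO (rkP r) :=
  ⟨fun _ => le_refl _, fun _ _ _ h1 h2 => le_trans h2 h1, fun a b => le_total (r b) (r a)⟩

lemma rkP_strict {r : A → ℕ} {a b : A} : StrictPref (rkP r) a b ↔ r b < r a := by
  constructor
  · rintro ⟨h1, h2⟩; exact lt_of_le_of_ne h1 (fun h => h2 (le_of_eq h.symm))
  · intro h; exact ⟨le_of_lt h, fun h2 => absurd (lt_of_lt_of_le h h2) (lt_irrefl _)⟩

lemma rkP_weak {r : A → ℕ} {a b : A} : rkP r a b ↔ r b ≤ r a := Iff.rfl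

/-- three-level rank function -/
noncomputable def r3 (a b : A) : A → ℕ := fun x => if x = a then 2 else if x = b then 1 else 0

lemma r3_a {a b : A} : r3 a b a = 2 := by simp [r3]
lemma r3_b {a b : A} (h : b ≠ a) : r3 a b b = 1 := by simp [r3, h]
lemma r3_other {a b c : A} (h1 : c ≠ a) (h2 : c ≠ b) : r3 a b c = 0 := by simp [r3, h1, h2]

end Aux

section Arrow

open Classical

variable {A I : Type*}

/-- the four axioms of the theorem -/
def GoodC (C : LProf A I → A → A → Prop) : Prop :=
  (∀ P : LProf A I, IsLPO (C P)) ∧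
  (∀ P : LProf A I, ∀ a b : A, (∀ i, P.1 i a b) → C P a b) ∧
  (∀ P : LProf A I, ∀ a b : A, (∀ i, P.1 i a b) →
    (∃ j, StrictPref (P.1 j) a b) → StrictPref (C P) a b) ∧
  (∀ P P' : LProf A I, ∀ a b : A,
    {i | P.1 i a b} = {i | P'.1 i a b} → {i | P.1 i b a} = {i | P'.1 i b a} →
    (C P a b ↔ C P' a b))

variable {C : LProf A I → A → A → Prop}

lemma iia_weak (hC : GoodC C) (P Q : LProf A I) (a b : A)
    (h1 : ∀ i, P.1 i a b ↔ Q.1 i a b) (h2 : ∀ i, P.1 i b a ↔ Q.1 i b a) :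
    C P a b ↔ C Q a b :=
  hC.2.2.2 P Q a b (Set.ext fun i => h1 i) (Set.ext fun i => h2 i)

lemma iia_strict (hC : GoodC C) (P Q : LProf A I) (a b : A)
    (h1 : ∀ i, P.1 i a b ↔ Q.1 i a b) (h2 : ∀ i, P.1 i b a ↔ Q.1 i b a) :
    (StrictPref (C P) a b ↔ StrictPref (C Q) a b) := by
  unfold StrictPref
  rw [iia_weak hC P Q a b h1 h2, iia_weak hC P Q b a h2 h1]

lemma pareto_strict (hC : GoodC C) (hI : Nonempty I) (P : LProf A I) (a b : A)
    (h : ∀ i, StrictPref (P.1 i) a b) : StrictPref (C P) a b :=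
  hC.2.2.1 P a b (fun i => (h i).1) ⟨hI.some, h hI.some⟩

/-- decisive coalition -/
def Dec (C : LProf A I → A → A → Prop) (J : Finset I) : Prop :=
  ∀ P : LProf A I, ∀ a b : A, a ≠ b → (∀ j ∈ J, StrictPref (P.1 j) a b) → StrictPref (C P) a b

/-- semi-decisive for the pair (a,b) -/
def SD (C : LProf A I → A → A → Prop) (J : Finset I) (a b : A) : Prop :=
  ∀ P : LProf A I, (∀ j ∈ J, StrictPref (P.1 j) a b) → (∀ j, j ∉ J → StrictPref (P.1 j) b a) →
    StrictPref (C P) a b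

/-- profile from rank functions -/
noncomputable def rprof (r : I → A → ℕ) : LProf A I := ⟨fun i => rkP (r i), fun _ => rkP_lpo _⟩

lemma sd_of_pattern (hC : GoodC C) {J : Finset I} {a b : A} (Q : LProf A I)
    (hQJ : ∀ j ∈ J, StrictPref (Q.1 j) a b) (hQn : ∀ j, j ∉ J → StrictPref (Q.1 j) b a)
    (hs : StrictPref (C Q) a b) : SD C J a b := by
  intro P hPJ hPn
  rw [iia_strict hC P Q a b ?_ ?_]
  · exact hs
  · intro i
    by_cases hi : i ∈ J
    · exact iff_of_true (hPJ i hi).1 (hQJ i hi).1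
    · exact iff_of_false (hPn i hi).2 (hQn i hi).2
  · intro i
    by_cases hi : i ∈ J
    · exact iff_of_false (hPJ i hi).2 (hQJ i hi).2
    · exact iff_of_true (hPn i hi).1 (hQn i hi).1

lemma sd_step1 (hC : GoodC C) (hI : Nonempty I) {J : Finset I} {a b c : A}
    (hab : a ≠ b) (hbc : b ≠ c) (hac : a ≠ c) (h : SD C J a b) : SD C J a c := by
  set Q : LProf A I := rprof (fun i => if i ∈ J then r3 a b else r3 b c) with hQdef
  have hQ : ∀ i, Q.1 i = rkP (if i ∈ J then r3 a b else r3 b c) := fun i => rfl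
  have hJab : ∀ j ∈ J, StrictPref (Q.1 j) a b := by
    intro j hj; rw [hQ j, if_pos hj, rkP_strict]
    simp [r3, hab, hbc, hac, hab.symm, hbc.symm, hac.symm]
  have hnba : ∀ j, j ∉ J → StrictPref (Q.1 j) b a := by
    intro j hj; rw [hQ j, if_neg hj, rkP_strict]
    simp [r3, hab, hbc, hac, hab.symm, hbc.symm, hac.symm]
  have s1 : StrictPref (C Q) a b := h Q hJab hnba
  have s2 : StrictPref (C Q) b c := by
    refine pareto_strict hC hI Q b c (fun i => ?_)
    rw [hQ i]; by_cases hi : i ∈ J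
    · rw [if_pos hi, rkP_strict]; simp [r3, hab, hbc, hac, hab.symm, hbc.symm, hac.symm]
    · rw [if_neg hi, rkP_strict]; simp [r3, hab, hbc, hac, hab.symm, hbc.symm, hac.symm]
  have s3 : StrictPref (C Q) a c := strict_weak_trans (hC.1 Q).2.1 s1 s2.1
  refine sd_of_pattern hC Q ?_ ?_ s3
  · intro j hj; rw [hQ j, if_pos hj, rkP_strict]
    simp [r3, hab, hbc, hac, hab.symm, hbc.symm, hac.symm]
  · intro j hj; rw [hQ j, if_neg hj, rkP_strict]
    simp [r3, hab, hbc, hac, hab.symm, hbc.symm, hac.symm]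

lemma sd_step2 (hC : GoodC C) (hI : Nonempty I) {J : Finset I} {a b c : A}
    (hab : a ≠ b) (hbc : b ≠ c) (hac : a ≠ c) (h : SD C J a b) : SD C J c b := by
  set Q : LProf A I := rprof (fun i => if i ∈ J then r3 c a else r3 b c) with hQdef
  have hQ : ∀ i, Q.1 i = rkP (if i ∈ J then r3 c a else r3 b c) := fun i => rfl
  have hJab : ∀ j ∈ J, StrictPref (Q.1 j) a b := by
    intro j hj; rw [hQ j, if_pos hj, rkP_strict]
    simp [r3, hab, hbc, hac, hab.symm, hbc.symm, hac.symm]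
  have hnba : ∀ j, j ∉ J → StrictPref (Q.1 j) b a := by
    intro j hj; rw [hQ j, if_neg hj, rkP_strict]
    simp [r3, hab, hbc, hac, hab.symm, hbc.symm, hac.symm]
  have s1 : StrictPref (C Q) a b := h Q hJab hnba
  have s2 : StrictPref (C Q) c a := by
    refine pareto_strict hC hI Q c a (fun i => ?_)
    rw [hQ i]; by_cases hi : i ∈ J
    · rw [if_pos hi, rkP_strict]; simp [r3, hab, hbc, hac, hab.symm, hbc.symm, hac.symm]
    · rw [if_neg hi, rkP_strict]; simp [r3, hab, hbc, hac, hab.symm, hbc.symm, hac.symm]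
  have s3 : StrictPref (C Q) c b := strict_weak_trans (hC.1 Q).2.1 s2 s1.1
  refine sd_of_pattern hC Q ?_ ?_ s3
  · intro j hj; rw [hQ j, if_pos hj, rkP_strict]
    simp [r3, hab, hbc, hac, hab.symm, hbc.symm, hac.symm]
  · intro j hj; rw [hQ j, if_neg hj, rkP_strict]
    simp [r3, hab, hbc, hac, hab.symm, hbc.symm, hac.symm]

lemma exists_third (hA : ThreeAlts A) (a b : A) : ∃ w : A, w ≠ a ∧ w ≠ b := by
  obtain ⟨x, y, z, hxy, hyz, hxz⟩ := hA
  by_cases hx : x ≠ a ∧ x ≠ b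
  · exact ⟨x, hx⟩
  by_cases hy : y ≠ a ∧ y ≠ b
  · exact ⟨y, hy⟩
  rw [not_and_or, not_ne_iff, not_ne_iff] at hx hy
  rcases hx with rfl | rfl <;> rcases hy with h | h
  · exact absurd h.symm hxy
  · exact ⟨z, fun hz => hxz (hz ▸ rfl), fun hz => hyz (h.trans hz.symm)⟩
  · exact ⟨z, fun hz => hyz (h.trans hz.symm), fun hz => hxz (hz ▸ rfl)⟩
  · exact absurd h.symm hxy

end Arrow

section Arrow2

open Classical

variable {A I : Type*} {C : LProf A I → A → A → Prop}

lemma sd_all (hC : GoodC C) (hA : ThreeAlts A) (hI : Nonempty I) {J : Finset I} {a b : A}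
    (hab : a ≠ b) (h : SD C J a b) : ∀ u v : A, u ≠ v → SD C J u v := by
  obtain ⟨w, hwa, hwb⟩ := exists_third hA a b
  have haw : SD C J a w := sd_step1 hC hI hab hwb.symm hwa.symm h
  have hbw : SD C J b w := sd_step2 hC hI hwa.symm hwb hab haw
  have hba : SD C J b a := sd_step1 hC hI hwb.symm hwa hab.symm hbw
  intro u v huv
  by_cases hua : u = a
  · subst hua
    by_cases hvb : v = b
    · subst hvb; exact h
    · exact sd_step1 hC hI hab (fun hv => hvb hv.symm) huv h
  · by_cases hub : u = b
    · subst hub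
      by_cases hva : v = a
      · subst hva; exact hba
      · exact sd_step1 hC hI hab.symm (fun hv => hva hv.symm) huv hba
    · have hub' : SD C J u b := sd_step2 hC hI hab (fun hv => hub hv.symm) (fun hv => hua hv.symm) h
      by_cases hvb : v = b
      · subst hvb; exact hub'
      · exact sd_step1 hC hI (fun hv => hub hv) (fun hv => hvb hv.symm) huv hub'

lemma dec_of_sd (hC : GoodC C) (hA : ThreeAlts A) (hI : Nonempty I) {J : Finset I}
    (hsd : ∀ u v : A, u ≠ v → SD C J u v) : Dec C J := by
  intro P a b hab hJ
  obtain ⟨w, hwa, hwb⟩ := exists_third hA a b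
  -- ranks for voters outside J, mirroring P's a-b comparison, with w on top
  set Q : LProf A I := rprof (fun i x =>
    if i ∈ J then r3 a w x
    else if x = w then 3 else if x = a then (if P.1 i a b then 2 else 1)
      else if x = b then (if P.1 i b a then 2 else 1) else 0) with hQdef
  have hQ : ∀ i, Q.1 i = rkP (fun x =>
    if i ∈ J then r3 a w x
    else if x = w then 3 else if x = a then (if P.1 i a b then 2 else 1)
      else if x = b then (if P.1 i b a then 2 else 1) else 0) := fun i => rfl
  -- society in Q strictly prefers a to w via semi-decisiveness
  have sAW : StrictPref (C Q) a w := by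
    refine hsd a w hwa.symm Q ?_ ?_
    · intro j hj; rw [hQ j, rkP_strict]
      simp [r3, hwa, hwa.symm, hj]
    · intro j hj; rw [hQ j, rkP_strict]
      simp [r3, hwa, hwa.symm, hab, hj]
      split <;> norm_num
  have sWB : StrictPref (C Q) w b := by
    refine pareto_strict hC hI Q w b (fun i => ?_)
    rw [hQ i, rkP_strict]
    by_cases hi : i ∈ J
    · simp [r3, hi, hwa, hwb, hab.symm, hwb.symm]
    · simp [hi, hwa, hwb, hwb.symm, hab.symm]
      split <;> norm_num
  have sAB : StrictPref (C Q) a b := strict_weak_trans (hC.1 Q).2.1 sAW sWB.1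
  -- transfer to P by IIA
  rw [iia_strict hC P Q a b ?_ ?_]
  · exact sAB
  · intro i
    by_cases hi : i ∈ J
    · refine iff_of_true (hJ i hi).1 ?_
      rw [hQ i]; show _ ≤ _
      simp [r3, hi, hab.symm, hwb.symm, hab, hwa.symm]
    · rw [hQ i]
      show P.1 i a b ↔ (_ ≤ _)
      by_cases h1 : P.1 i a b <;> by_cases h2 : P.1 i b a
      · norm_num [rkP, hi, hab, hab.symm, Ne.symm hwa, Ne.symm hwb, h1, h2]
      · norm_num [rkP, hi, hab, hab.symm, Ne.symm hwa, Ne.symm hwb, h1, h2]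
      · norm_num [rkP, hi, hab, hab.symm, Ne.symm hwa, Ne.symm hwb, h1, h2]
      · exact absurd ((P.2 i).2.2 a b |>.resolve_left h1) h2
  · intro i
    by_cases hi : i ∈ J
    · refine iff_of_false (hJ i hi).2 ?_
      rw [hQ i]; show ¬ (_ ≤ _)
      simp [r3, hi, hab.symm, hwb.symm, hab, hwa.symm]
    · rw [hQ i]
      show P.1 i b a ↔ (_ ≤ _)
      by_cases h1 : P.1 i a b <;> by_cases h2 : P.1 i b a
      · norm_num [rkP, hi, hab, hab.symm, Ne.symm hwa, Ne.symm hwb, h1, h2]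
      · norm_num [rkP, hi, hab, hab.symm, Ne.symm hwa, Ne.symm hwb, h1, h2]
      · norm_num [rkP, hi, hab, hab.symm, Ne.symm hwa, Ne.symm hwb, h1, h2]
      · exact absurd ((P.2 i).2.2 a b |>.resolve_left h1) h2

end Arrow2

section Arrow3

open Classical

variable {A I : Type*} {C : LProf A I → A → A → Prop}

lemma dec_shrink (hC : GoodC C) (hA : ThreeAlts A) (hI : Nonempty I) {J : Finset I}
    (hJ2 : 2 ≤ J.card) (hdec : Dec C J) :
    ∃ J' : Finset I, J'.Nonempty ∧ J'.card < J.card ∧ Dec C J' := by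
  obtain ⟨a, b, c, hab, hbc, hac⟩ := id hA
  obtain ⟨j, hj⟩ : J.Nonempty := Finset.card_pos.mp (by omega)
  set J' : Finset I := J.erase j with hJ'def
  have hJ'card : J'.card = J.card - 1 := Finset.card_erase_of_mem hj
  have hJ'ne : J'.Nonempty := Finset.card_pos.mp (by omega)
  set Q : LProf A I := rprof (fun i =>
    if i = j then r3 a b else if i ∈ J then r3 c a else r3 b c) with hQdef
  have hQ : ∀ i, Q.1 i = rkP
      (if i = j then r3 a b else if i ∈ J then r3 c a else r3 b c) := fun i => rfl
  have s1 : StrictPref (C Q) a b := by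
    refine hdec Q a b hab (fun i hi => ?_)
    rw [hQ i, rkP_strict]
    by_cases hij : i = j
    · simp [hij, r3, hab, hbc, hac, hab.symm, hbc.symm, hac.symm]
    · simp [hij, hi, r3, hab, hbc, hac, hab.symm, hbc.symm, hac.symm]
  by_cases hx : StrictPref (C Q) a c
  · -- {j} is semi-decisive for (a,c)
    refine ⟨{j}, ⟨j, Finset.mem_singleton_self j⟩, ?_, ?_⟩
    · rw [Finset.card_singleton]; omega
    · refine dec_of_sd hC hA hI (sd_all hC hA hI hac ?_)
      refine sd_of_pattern hC Q ?_ ?_ hx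
      · intro i hi
        rw [Finset.mem_singleton] at hi
        rw [hQ i, rkP_strict, if_pos hi]
        simp [r3, hab, hbc, hac, hab.symm, hbc.symm, hac.symm]
      · intro i hi
        rw [Finset.mem_singleton] at hi
        rw [hQ i, rkP_strict, if_neg hi]
        by_cases hiJ : i ∈ J
        · simp [hiJ, r3, hab, hbc, hac, hab.symm, hbc.symm, hac.symm]
        · simp [hiJ, r3, hab, hbc, hac, hab.symm, hbc.symm, hac.symm]
  · -- J' is semi-decisive for (c,b)
    have hca : C Q c a := weak_of_not_strict (hC.1 Q) hx
    have scb : StrictPref (C Q) c b := weak_strict_trans (hC.1 Q).2.1 hca s1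
    refine ⟨J', hJ'ne, by omega, ?_⟩
    refine dec_of_sd hC hA hI (sd_all hC hA hI hbc.symm ?_)
    refine sd_of_pattern hC Q ?_ ?_ scb
    · intro i hi
      have hij : i ≠ j := Finset.ne_of_mem_erase hi
      have hiJ : i ∈ J := Finset.mem_of_mem_erase hi
      rw [hQ i, rkP_strict, if_neg hij, if_pos hiJ]
      simp [r3, hab, hbc, hac, hab.symm, hbc.symm, hac.symm]
    · intro i hi
      rw [hQ i, rkP_strict]
      by_cases hij : i = j
      · rw [if_pos hij]
        simp [r3, hab, hbc, hac, hab.symm, hbc.symm, hac.symm]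
      · have hiJ : i ∉ J := fun hiJ => hi (Finset.mem_erase.mpr ⟨hij, hiJ⟩)
        rw [if_neg hij, if_neg hiJ]
        simp [r3, hab, hbc, hac, hab.symm, hbc.symm, hac.symm]

lemma exists_dictator (hC : GoodC C) (hA : ThreeAlts A) (hI : Nonempty I) [Fintype I] :
    ∃ k : I, ∀ P : LProf A I, ∀ a b : A, StrictPref (P.1 k) a b → StrictPref (C P) a b := by
  have huniv : Dec C Finset.univ := by
    intro P a b _ h
    exact pareto_strict hC hI P a b (fun i => h i (Finset.mem_univ i))
  suffices H : ∀ n (J : Finset I), J.card = n → J.Nonempty → Dec C J →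
      ∃ k, Dec C {k} by
    obtain ⟨k, hk⟩ := H _ Finset.univ rfl (Finset.univ_nonempty_iff.mpr hI) huniv
    refine ⟨k, fun P a b hs => ?_⟩
    have hab : a ≠ b := strictpref_ne (P.2 k).1 hs
    exact hk P a b hab (fun i hi => (Finset.mem_singleton.mp hi) ▸ hs)
  intro n
  induction n using Nat.strong_induction_on with
  | _ n ih =>
    intro J hcard hne hdec
    by_cases h1 : J.card ≤ 1
    · obtain ⟨k, rfl⟩ := Finset.card_eq_one.mp (le_antisymm h1 (Finset.card_pos.mpr hne))
      exact ⟨k, hdec⟩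
    · obtain ⟨J', hne', hlt, hdec'⟩ := dec_shrink hC hA hI (by omega) hdec
      exact ih J'.card (by omega) J' rfl hne' hdec'

end Arrow3

section Lex

open Classical

variable {A I κ : Type*}

lemma indiff_symm {P : A → A → Prop} {a b : A} (h : Indiff P a b) : Indiff P b a := ⟨h.2, h.1⟩

lemma lex_refl (P : I → A → A → Prop) (hP : ∀ i, IsLPO (P i)) :
    ∀ (l : List I) (a : A), LexRule l P a a := by
  intro l
  induction l with
  | nil => intro a; trivial
  | cons k t ih => intro a; exact Or.inl ⟨⟨(hP k).1 a, (hP k).1 a⟩, ih a⟩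

lemma lex_total (P : I → A → A → Prop) (hP : ∀ i, IsLPO (P i)) :
    ∀ (l : List I) (a b : A), LexRule l P a b ∨ LexRule l P b a := by
  intro l
  induction l with
  | nil => intro a b; exact Or.inl trivial
  | cons k t ih =>
    intro a b
    by_cases hk : Indiff (P k) a b
    · rcases ih a b with h | h
      · exact Or.inl (Or.inl ⟨hk, h⟩)
      · exact Or.inr (Or.inl ⟨indiff_symm hk, h⟩)
    · rcases (hP k).2.2 a b with h | h
      · exact Or.inl (Or.inr ⟨hk, h⟩)
      · exact Or.inr (Or.inr ⟨fun hi => hk (indiff_symm hi), h⟩)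

lemma lex_trans (P : I → A → A → Prop) (hP : ∀ i, IsLPO (P i)) :
    ∀ (l : List I) (a b c : A), LexRule l P a b → LexRule l P b c → LexRule l P a c := by
  intro l
  induction l with
  | nil => intro a b c _ _; trivial
  | cons k t ih =>
    intro a b c h1 h2
    rcases h1 with ⟨i1, r1⟩ | ⟨n1, w1⟩ <;> rcases h2 with ⟨i2, r2⟩ | ⟨n2, w2⟩
    · exact Or.inl ⟨⟨(hP k).2.1 i1.1 i2.1, (hP k).2.1 i2.2 i1.2⟩, ih a b c r1 r2⟩
    · have s2 : StrictPref (P k) b c := ⟨w2, fun h => n2 ⟨w2, h⟩⟩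
      have s : StrictPref (P k) a c := weak_strict_trans (hP k).2.1 i1.1 s2
      exact Or.inr ⟨fun hi => s.2 hi.2, s.1⟩
    · have s1 : StrictPref (P k) a b := ⟨w1, fun h => n1 ⟨w1, h⟩⟩
      have s : StrictPref (P k) a c := strict_weak_trans (hP k).2.1 s1 i2.1
      exact Or.inr ⟨fun hi => s.2 hi.2, s.1⟩
    · have s1 : StrictPref (P k) a b := ⟨w1, fun h => n1 ⟨w1, h⟩⟩
      have s2 : StrictPref (P k) b c := ⟨w2, fun h => n2 ⟨w2, h⟩⟩
      have s := strict_weak_trans (hP k).2.1 s1 s2.1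
      exact Or.inr ⟨fun hi => s.2 hi.2, s.1⟩

lemma lex_weak (P : I → A → A → Prop) :
    ∀ (l : List I) (a b : A), (∀ i ∈ l, P i a b) → LexRule l P a b := by
  intro l
  induction l with
  | nil => intro a b _; trivial
  | cons k t ih =>
    intro a b h
    by_cases hk : Indiff (P k) a b
    · exact Or.inl ⟨hk, ih a b (fun i hi => h i (List.mem_cons_of_mem _ hi))⟩
    · exact Or.inr ⟨hk, h k (List.mem_cons_self)⟩

lemma lex_strong (P : I → A → A → Prop) :
    ∀ (l : List I) (a b : A), (∀ i ∈ l, P i a b) → (∃ j ∈ l, StrictPref (P j) a b) →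
      StrictPref (LexRule l P) a b := by
  intro l
  induction l with
  | nil => intro a b _ h; obtain ⟨j, hj, _⟩ := h; simp at hj
  | cons k t ih =>
    intro a b hw ⟨j, hj, hs⟩
    by_cases hk : Indiff (P k) a b
    · have hjt : j ∈ t := by
        rcases List.mem_cons.mp hj with rfl | h
        · exact absurd hk.2 hs.2
        · exact h
      have hrec := ih a b (fun i hi => hw i (List.mem_cons_of_mem _ hi)) ⟨j, hjt, hs⟩
      constructor
      · exact Or.inl ⟨hk, hrec.1⟩
      · rintro (⟨_, hba⟩ | ⟨hn, _⟩)
        · exact hrec.2 hba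
        · exact hn (indiff_symm hk)
    · have hks : StrictPref (P k) a b :=
        ⟨hw k (List.mem_cons_self), fun h => hk ⟨hw k (List.mem_cons_self), h⟩⟩
      constructor
      · exact Or.inr ⟨hk, hks.1⟩
      · rintro (⟨hi, _⟩ | ⟨_, hba⟩)
        · exact hk (indiff_symm hi)
        · exact hks.2 hba

lemma lex_iia (P P' : I → A → A → Prop) :
    ∀ (l : List I) (a b : A), (∀ i ∈ l, P i a b ↔ P' i a b) → (∀ i ∈ l, P i b a ↔ P' i b a) →
      (LexRule l P a b ↔ LexRule l P' a b) := by
  intro l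
  induction l with
  | nil => intro a b _ _; exact Iff.rfl
  | cons k t ih =>
    intro a b h1 h2
    have hk : Indiff (P k) a b ↔ Indiff (P' k) a b :=
      and_congr (h1 k (List.mem_cons_self)) (h2 k (List.mem_cons_self))
    have iht := ih a b (fun i hi => h1 i (List.mem_cons_of_mem _ hi))
      (fun i hi => h2 i (List.mem_cons_of_mem _ hi))
    show (_ ∧ _) ∨ (_ ∧ _) ↔ (_ ∧ _) ∨ (_ ∧ _)
    exact or_congr (and_congr hk iht) (and_congr (not_congr hk) (h1 k (List.mem_cons_self)))

lemma lex_map (f : κ → I) (P : I → A → A → Prop) :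
    ∀ (l : List κ) (a b : A), LexRule (l.map f) P a b ↔ LexRule l (fun x => P (f x)) a b := by
  intro l
  induction l with
  | nil => intro a b; exact Iff.rfl
  | cons k t ih =>
    intro a b
    show (_ ∧ _) ∨ (_ ∧ _) ↔ (_ ∧ _) ∨ (_ ∧ _)
    exact or_congr (and_congr Iff.rfl (ih a b)) Iff.rfl

lemma lex_cover [Fintype I] {π : List I} (hnd : π.Nodup) (hlen : π.length = Fintype.card I) :
    ∀ i : I, i ∈ π := by
  have h : π.toFinset = Finset.univ :=
    Finset.eq_univ_of_card _ (by rw [List.toFinset_card_of_nodup hnd, hlen])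
  intro i
  exact List.mem_toFinset.mp (h ▸ Finset.mem_univ i)

lemma goodC_lex [Fintype I] (π : List I) (hnd : π.Nodup) (hlen : π.length = Fintype.card I) :
    GoodC (fun (P : LProf A I) a b => LexRule π P.1 a b) := by
  have hcov := lex_cover hnd hlen
  refine ⟨fun P => ⟨fun a => lex_refl P.1 P.2 π a,
      fun a b c h1 h2 => lex_trans P.1 P.2 π a b c h1 h2,
      fun a b => lex_total P.1 P.2 π a b⟩, ?_, ?_, ?_⟩
  · intro P a b h
    exact lex_weak P.1 π a b (fun i _ => h i)
  · intro P a b hw ⟨j, hj⟩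
    exact lex_strong P.1 π a b (fun i _ => hw i) ⟨j, hcov j, hj⟩
  · intro P P' a b h1 h2
    exact lex_iia P.1 P'.1 π a b (fun i _ => Set.ext_iff.mp h1 i) (fun i _ => Set.ext_iff.mp h2 i)

end Lex

section Serial

open Classical

noncomputable def extProf {A I : Type*} (k : I) (Q : LProf A {i : I // i ≠ k}) : LProf A I :=
  ⟨fun i => if h : i = k then fun _ _ => True else Q.1 ⟨i, h⟩, by
    intro i
    by_cases h : i = k
    · simp only [dif_pos h]
      exact ⟨fun _ => trivial, fun _ _ _ _ _ => trivial, fun _ _ => Or.inl trivial⟩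
    · simp only [dif_neg h]
      exact Q.2 ⟨i, h⟩⟩

lemma extProf_k {A I : Type*} (k : I) (Q : LProf A {i : I // i ≠ k}) :
    (extProf k Q).1 k = fun _ _ => True := dif_pos rfl

lemma extProf_ne {A I : Type*} (k : I) (Q : LProf A {i : I // i ≠ k}) {i : I} (h : i ≠ k) :
    (extProf k Q).1 i = Q.1 ⟨i, h⟩ := dif_neg h

lemma goodC_restrict {A I : Type*} (k : I) {C : LProf A I → A → A → Prop} (hC : GoodC C) :
    GoodC (fun (Q : LProf A {i : I // i ≠ k}) a b => C (extProf k Q) a b) := by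
  refine ⟨fun Q => hC.1 _, ?_, ?_, ?_⟩
  · intro Q a b h
    refine hC.2.1 _ a b (fun i => ?_)
    by_cases hik : i = k
    · subst hik; rw [extProf_k]; trivial
    · rw [extProf_ne k Q hik]; exact h ⟨i, hik⟩
  · intro Q a b hw ⟨j, hj⟩
    refine hC.2.2.1 _ a b (fun i => ?_) ⟨j.1, ?_⟩
    · by_cases hik : i = k
      · subst hik; rw [extProf_k]; trivial
      · rw [extProf_ne k Q hik]; exact hw ⟨i, hik⟩
    · rw [extProf_ne k Q j.2]; exact hj
  · intro Q Q' a b h1 h2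
    refine hC.2.2.2 _ _ a b (Set.ext fun i => ?_) (Set.ext fun i => ?_) <;>
      simp only [Set.mem_setOf_eq]
    · by_cases hik : i = k
      · subst hik; rw [extProf_k, extProf_k]
      · rw [extProf_ne k Q hik, extProf_ne k Q' hik]
        exact Set.ext_iff.mp h1 ⟨i, hik⟩
    · by_cases hik : i = k
      · subst hik; rw [extProf_k, extProf_k]
      · rw [extProf_ne k Q hik, extProf_ne k Q' hik]
        exact Set.ext_iff.mp h2 ⟨i, hik⟩

lemma main_aux {A : Type u} (hA : ThreeAlts A) :
    ∀ (n : ℕ) (I : Type v) [Fintype I], Fintype.card I = n →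
    ∀ C : LProf A I → A → A → Prop, GoodC C →
    ∃ π : List I, π.Nodup ∧ π.length = n ∧ ∀ P a b, C P a b ↔ LexRule π P.1 a b := by
  intro n
  induction n with
  | zero =>
    intro I _ hcard C hC
    have hempty : IsEmpty I := Fintype.card_eq_zero_iff.mp hcard
    refine ⟨[], List.nodup_nil, rfl, fun P a b => ?_⟩
    exact iff_of_true (hC.2.1 P a b (fun i => isEmptyElim i)) trivial
  | succ n ih =>
    intro I _ hcard C hC
    have hI : Nonempty I := Fintype.card_pos_iff.mp (by omega)
    obtain ⟨k, hk⟩ := exists_dictator hC hA hI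
    have hcard' : Fintype.card {i : I // i ≠ k} = n := by
      have h1 : Fintype.card {i : I // i ≠ k} = Fintype.card I - 1 := by
        rw [Fintype.card_subtype_compl, Fintype.card_subtype_eq]
      omega
    obtain ⟨π', hnd', hlen', hiff'⟩ := ih {i : I // i ≠ k} hcard'
      (fun Q a b => C (extProf k Q) a b) (goodC_restrict k hC)
    refine ⟨k :: π'.map Subtype.val, ?_, ?_, ?_⟩
    · refine List.nodup_cons.mpr ⟨?_, hnd'.map Subtype.val_injective⟩
      intro hmem
      obtain ⟨j, _, hj⟩ := List.mem_map.mp hmem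
      exact j.2 hj
    · simp [hlen']
    · intro P a b
      by_cases hi : Indiff (P.1 k) a b
      · set Q : LProf A {i : I // i ≠ k} := ⟨fun i' => P.1 i'.1, fun i' => P.2 i'.1⟩ with hQdef
        have key : C P a b ↔ C (extProf k Q) a b := by
          refine iia_weak hC P (extProf k Q) a b (fun i => ?_) (fun i => ?_)
          · by_cases hik : i = k
            · subst hik; rw [extProf_k]; exact ⟨fun _ => trivial, fun _ => hi.1⟩
            · rw [extProf_ne k Q hik]
          · by_cases hik : i = k
            · subst hik; rw [extProf_k]; exact ⟨fun _ => trivial, fun _ => hi.2⟩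
            · rw [extProf_ne k Q hik]
        rw [key, hiff' Q a b]
        have hmap : LexRule (π'.map Subtype.val) P.1 a b ↔ LexRule π' Q.1 a b :=
          lex_map Subtype.val P.1 π' a b
        constructor
        · intro h; exact Or.inl ⟨hi, hmap.mpr h⟩
        · rintro (⟨_, h⟩ | ⟨hn, _⟩)
          · exact hmap.mp h
          · exact absurd hi hn
      · rcases (P.2 k).2.2 a b with hw | hw
        · have hs : StrictPref (P.1 k) a b := ⟨hw, fun h => hi ⟨hw, h⟩⟩
          exact iff_of_true (hk P a b hs).1 (Or.inr ⟨hi, hw⟩)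
        · have hs : StrictPref (P.1 k) b a := ⟨hw, fun h => hi ⟨h, hw⟩⟩
          refine iff_of_false (hk P b a hs).2 ?_
          rintro (⟨hind, _⟩ | ⟨_, hab⟩)
          · exact hi hind
          · exact hs.2 hab

end Serial

section Inj

open Classical

variable {A I : Type*}

lemma lex_cons_indiff {P : I → A → A → Prop} {k : I} {t : List I} {a b : A}
    (hk : Indiff (P k) a b) : LexRule (k :: t) P a b ↔ LexRule t P a b := by
  constructor
  · rintro (⟨_, h⟩ | ⟨hn, _⟩)
    · exact h
    · exact absurd hk hn
  · intro h
    exact Or.inl ⟨hk, h⟩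

lemma lex_inj (hab : ∃ a b : A, a ≠ b) :
    ∀ (l l' : List I), l.Nodup → l'.Nodup → l.toFinset = l'.toFinset →
    (∀ P : LProf A I, ∀ a b : A, LexRule l P.1 a b ↔ LexRule l' P.1 a b) → l = l' := by
  intro l
  induction l with
  | nil =>
    intro l' _ _ hfs _
    cases l' with
    | nil => rfl
    | cons k' t' =>
      exfalso
      have : k' ∈ (List.nil (α := I)).toFinset := by
        rw [hfs]; simp
      simp at this
  | cons k t ih =>
    intro l' hnd hnd' hfs heq
    obtain ⟨a, b, hab'⟩ := hab
    cases l' with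
    | nil =>
      exfalso
      have : k ∈ (List.nil (α := I)).toFinset := by
        rw [← hfs]; simp
      simp at this
    | cons k' t' =>
      have hkk' : k = k' := by
        by_contra hkk
        set P : LProf A I := rprof (fun i => if i = k then (fun x => if x = a then 1 else 0)
          else if i = k' then (fun x => if x = b then 1 else 0) else fun _ => 0) with hPdef
        have hPk : P.1 k = rkP (fun x => if x = a then 1 else 0) :=
          congrArg rkP (if_pos rfl)
        have hPk' : P.1 k' = rkP (fun x => if x = b then 1 else 0) := by
          refine congrArg rkP (funext fun x => ?_)
          simp [Ne.symm hkk]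
        have h1 : LexRule (k :: t) P.1 a b := by
          refine Or.inr ⟨?_, ?_⟩
          · intro hind
            have := hind.2
            rw [hPk] at this
            simp [rkP, hab'.symm] at this
          · rw [hPk]
            simp [rkP, hab'.symm]
        have h2 : ¬ LexRule (k' :: t') P.1 a b := by
          have hw : ¬ P.1 k' a b := by
            rw [hPk']
            simp [rkP, hab']
          rintro (⟨⟨hx, _⟩, _⟩ | ⟨_, hx⟩) <;> exact hw hx
        exact h2 ((heq P a b).mp h1)
      subst hkk'
      have hkt : k ∉ t := (List.nodup_cons.mp hnd).1
      have hkt' : k ∉ t' := (List.nodup_cons.mp hnd').1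
      have hfs' : t.toFinset = t'.toFinset := by
        have h1 : (insert k t.toFinset).erase k = (insert k t'.toFinset).erase k := by
          rw [← List.toFinset_cons, ← List.toFinset_cons, hfs]
        rwa [Finset.erase_insert (by simpa using hkt), Finset.erase_insert (by simpa using hkt')] at h1
      have htt' : t = t' := by
        refine ih t' (List.nodup_cons.mp hnd).2 (List.nodup_cons.mp hnd').2 hfs' ?_
        intro P a' b'
        set P' : LProf A I := ⟨fun i => if i = k then (fun _ _ => True) else P.1 i, by
          intro i
          by_cases h : i = k
          · simp only [if_pos h]
            exact ⟨fun _ => trivial, fun _ _ _ _ _ => trivial, fun _ _ => Or.inl trivial⟩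
          · simp only [if_neg h]
            exact P.2 i⟩ with hP'def
        have hP'i : ∀ i, i ≠ k → P'.1 i = P.1 i := fun i h => if_neg h
        have hP'k : P'.1 k = fun _ _ => True := if_pos rfl
        have hindk : Indiff (P'.1 k) a' b' := by
          rw [hP'k]; exact ⟨trivial, trivial⟩
        have e1 : LexRule t P.1 a' b' ↔ LexRule t P'.1 a' b' := by
          refine lex_iia P.1 P'.1 t a' b' (fun i hi => ?_) (fun i hi => ?_) <;>
            rw [hP'i i (fun h => hkt (h ▸ hi))]
        have e2 : LexRule t' P.1 a' b' ↔ LexRule t' P'.1 a' b' := by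
          refine lex_iia P.1 P'.1 t' a' b' (fun i hi => ?_) (fun i hi => ?_) <;>
            rw [hP'i i (fun h => hkt' (h ▸ hi))]
        have e3 := heq P' a' b'
        rw [lex_cons_indiff hindk, lex_cons_indiff hindk] at e3
        exact e1.trans (e3.trans e2.symm)
      rw [htt']

lemma card_lists (I : Type*) [Fintype I] :
    Nat.card {π : List I // π.Nodup ∧ π.length = Fintype.card I} =
      (Fintype.card I).factorial := by
  set n := Fintype.card I with hn
  let F : (Fin n ≃ I) → {π : List I // π.Nodup ∧ π.length = n} := fun e =>
    ⟨List.ofFn e, List.nodup_ofFn.mpr e.injective, List.length_ofFn⟩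
  have hbij : Function.Bijective F := by
    constructor
    · intro e e' h
      have h2 : List.ofFn e = List.ofFn e' := congrArg Subtype.val h
      have h3 := List.ofFn_inj.mp h2
      ext i
      exact congrFun h3 i
    · rintro ⟨l, hnd, hlen⟩
      have hinj : Function.Injective (fun i : Fin n => l.get (Fin.cast hlen.symm i)) := by
        intro i j h
        have := List.nodup_iff_injective_get.mp hnd h
        simpa [Fin.ext_iff] using this
      have hf : Function.Bijective (fun i : Fin n => l.get (Fin.cast hlen.symm i)) := by
        rw [Fintype.bijective_iff_injective_and_card]
        exact ⟨hinj, by simp [hn]⟩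
      refine ⟨Equiv.ofBijective _ hf, ?_⟩
      apply Subtype.ext
      show List.ofFn _ = l
      refine List.ext_get (by simp [hlen]) (fun i h1 h2 => ?_)
      rw [List.get_ofFn]
      rfl
  rw [← Nat.card_eq_of_bijective F hbij, Nat.card_eq_fintype_card,
    Fintype.card_equiv (Fintype.equivFinOfCardEq (rfl : Fintype.card I = n)).symm,
    Fintype.card_fin]

end Inj

theorem count_strongly_unanimous_dictatorships [Fintype I] (hA : ThreeAlts A) :
    Nat.card {C : LProf A I → A → A → Prop //
      (∀ P : LProf A I, IsLPO (C P)) ∧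
      (∀ P : LProf A I, ∀ a b : A, (∀ i, P.1 i a b) → C P a b) ∧
      (∀ P : LProf A I, ∀ a b : A, (∀ i, P.1 i a b) →
        (∃ j, StrictPref (P.1 j) a b) → StrictPref (C P) a b) ∧
      (∀ P P' : LProf A I, ∀ a b : A,
        {i | P.1 i a b} = {i | P'.1 i a b} → {i | P.1 i b a} = {i | P'.1 i b a} →
        (C P a b ↔ C P' a b)) } = (Fintype.card I).factorial ∧
    ∀ C : LProf A I → A → A → Prop,
      ((∀ P : LProf A I, IsLPO (C P)) ∧
       (∀ P : LProf A I, ∀ a b : A, (∀ i, P.1 i a b) → C P a b) ∧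
       (∀ P : LProf A I, ∀ a b : A, (∀ i, P.1 i a b) →
         (∃ j, StrictPref (P.1 j) a b) → StrictPref (C P) a b) ∧
       (∀ P P' : LProf A I, ∀ a b : A,
         {i | P.1 i a b} = {i | P'.1 i a b} → {i | P.1 i b a} = {i | P'.1 i b a} →
         (C P a b ↔ C P' a b))) ↔
      ∃ π : List I, π.Nodup ∧ π.length = Fintype.card I ∧
        C = fun P a b => LexRule π P.1 a b := by
  classical
  have hab2 : ∃ a b : A, a ≠ b := by
    obtain ⟨a, b, c, h1, h2, h3⟩ := hA
    exact ⟨a, b, h1⟩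
  have part2 : ∀ C : LProf A I → A → A → Prop, GoodC C ↔
      ∃ π : List I, π.Nodup ∧ π.length = Fintype.card I ∧
        C = fun P a b => LexRule π P.1 a b := by
    intro C
    constructor
    · intro hC
      obtain ⟨π, hnd, hlen, hiff⟩ := main_aux hA (Fintype.card I) I rfl C hC
      exact ⟨π, hnd, hlen, funext fun P => funext fun a => funext fun b => propext (hiff P a b)⟩
    · rintro ⟨π, hnd, hlen, rfl⟩
      exact goodC_lex π hnd hlen
  constructor
  · show Nat.card {C : LProf A I → A → A → Prop // GoodC C} = (Fintype.card I).factorial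
    let G : {π : List I // π.Nodup ∧ π.length = Fintype.card I} →
        {C : LProf A I → A → A → Prop // GoodC C} := fun π =>
      ⟨fun P a b => LexRule π.1 P.1 a b, goodC_lex π.1 π.2.1 π.2.2⟩
    have hGbij : Function.Bijective G := by
      constructor
      · intro π π' h
        have h2 : (fun (P : LProf A I) a b => LexRule π.1 P.1 a b)
            = (fun (P : LProf A I) a b => LexRule π'.1 P.1 a b) := congrArg Subtype.val h
        apply Subtype.ext
        refine lex_inj hab2 π.1 π'.1 π.2.1 π'.2.1 ?_ ?_
        · rw [Finset.eq_univ_of_card π.1.toFinset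
              (by rw [List.toFinset_card_of_nodup π.2.1, π.2.2]),
            Finset.eq_univ_of_card π'.1.toFinset
              (by rw [List.toFinset_card_of_nodup π'.2.1, π'.2.2])]
        · intro P a b
          exact iff_of_eq (congrFun (congrFun (congrFun h2 P) a) b)
      · rintro ⟨C, hC⟩
        obtain ⟨π, hnd, hlen, heq⟩ := (part2 C).mp hC
        exact ⟨⟨π, hnd, hlen⟩, Subtype.ext heq.symm⟩
    rw [← Nat.card_eq_of_bijective G hGbij, card_lists I]
  · intro C
    exact part2 C
end

section
/- Let F be a filter on a (possibly infinite) set I. Define C_F : PPO_A^I → PPO_A by a ≽ b iff {i ∈ I : a ≽_i b} contains some member of F. Then C_F is well-defined (the aggregate relation is reflexive and transitive) and satisfies unanimity, neutrality, monotonicity, and independence of irrelevant alternatives; moreover F is exactly the collection of decisive sets of C_F and also exactly the collection of strongly decisive sets. If F is an ultrafilter or the trivial filter 2^I, then C_F maps LPO_A^I into LPO_A. -/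
variable {A I : Type*}

/-- The voting system associated to a filter `F` on the set of voters. -/
def FilterRule (F : Filter I) : (I → A → A → Prop) → A → A → Prop :=
  fun P a b => {i | P i a b} ∈ F

/-!
Membership of `{i | a ≽ᵢ b}` in `F` is preserved under supersets and finite intersections,
which gives transitivity, monotonicity and strong decisiveness of every member of `F`.
Conversely, a set `J` decisive for `C_F` lies in `F`: test it on the profile in which the voters
of `J` strictly prefer `a` to `b` and every other relation is equality. For an ultrafilter `U`,
completeness of the aggregate relation holds because `{i | a ≽ᵢ b} ∪ {i | b ≽ᵢ a} = I ∈ U`.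
-/

theorem IsLPO.isPPO {P : A → A → Prop} (hP : IsLPO P) : IsPPO P := ⟨hP.1, hP.2.1⟩

theorem SDecisive.decisive {C : (I → A → A → Prop) → A → A → Prop} {J : Set I}
    (hJ : SDecisive C J) : Decisive C J :=
  fun P hP a b h => hJ P hP a b fun j hj => (h j hj).1

def pairProfile (J : Set I) (a b : A) : I → A → A → Prop :=
  fun i x y => x = y ∨ (i ∈ J ∧ x = a ∧ y = b)

section pairProfile

variable {J : Set I} {a b : A}

theorem isPPOProfile_pairProfile (hab : a ≠ b) : IsPPOProfile (pairProfile J a b) := by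
  refine fun i => ⟨fun x => Or.inl rfl, ?_⟩
  rintro x y z (rfl | ⟨hi, rfl, rfl⟩) (rfl | ⟨hi', rfl, rfl⟩)
  · exact Or.inl rfl
  · exact Or.inr ⟨hi', rfl, rfl⟩
  · exact Or.inr ⟨hi, rfl, rfl⟩
  · exact absurd rfl hab

theorem strictPref_pairProfile (hab : a ≠ b) {j : I} (hj : j ∈ J) :
    StrictPref (pairProfile J a b j) a b :=
  ⟨Or.inr ⟨hj, rfl, rfl⟩, by rintro (h | ⟨-, h, -⟩) <;> exact hab h.symm⟩

theorem setOf_pairProfile (hab : a ≠ b) : {i | pairProfile J a b i a b} = J := by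
  ext i
  simp [pairProfile, hab]

end pairProfile

namespace FilterRule

variable {F : Filter I} {P : I → A → A → Prop}

theorem isPPO (hP : IsPPOProfile P) : IsPPO (FilterRule F P) :=
  ⟨fun a => Filter.univ_mem' fun i => (hP i).1 a,
    fun _ _ _ hab hbc =>
      Filter.mem_of_superset (Filter.inter_mem hab hbc) fun i h => (hP i).2 h.1 h.2⟩

theorem unanimity : Unanimity (FilterRule F (A := A)) :=
  fun _ _ _ _ h => Filter.univ_mem' h

theorem neutrality : Neutrality (FilterRule F (A := A)) :=
  fun _ _ _ _ _ => Iff.rfl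

theorem monotonicity : Monotonicity (FilterRule F (A := A)) :=
  fun _ _ _ _ _ _ hab _ hC => Filter.mem_of_superset hC hab

theorem iia : IIA (FilterRule F (A := A)) := by
  intro P P' _ _ a b hab _
  rw [FilterRule, FilterRule, hab]

theorem sDecisive_of_mem {J : Set I} (hJ : J ∈ F) : SDecisive (FilterRule F (A := A)) J :=
  fun _ _ _ _ h => Filter.mem_of_superset hJ h

theorem mem_of_decisive {J : Set I} {a b : A} (hab : a ≠ b)
    (hJ : Decisive (FilterRule F (A := A)) J) : J ∈ F := by
  have h := hJ _ (isPPOProfile_pairProfile hab) a b fun j hj => strictPref_pairProfile hab hj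
  rwa [FilterRule, setOf_pairProfile hab] at h

theorem isLPO_bot (P : I → A → A → Prop) : IsLPO (FilterRule ⊥ P) :=
  ⟨fun _ => Filter.mem_bot, fun _ _ _ _ _ => Filter.mem_bot, fun _ _ => Or.inl Filter.mem_bot⟩

theorem isLPO_ultrafilter (U : Ultrafilter I) (hP : IsLPOProfile P) : IsLPO (FilterRule ↑U P) :=
  have ⟨hrefl, htrans⟩ := isPPO (F := ↑U) fun i => (hP i).isPPO
  ⟨hrefl, htrans, fun a b => Ultrafilter.union_mem_iff.mp <|
    Filter.univ_mem' fun i => (hP i).2.2 a b⟩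

end FilterRule

theorem filter_voting_system (hA : ThreeAlts A) (F : Filter I) :
    (∀ P : I → A → A → Prop, IsPPOProfile P → IsPPO (FilterRule F P)) ∧
    Unanimity (FilterRule F (A := A)) ∧
    Neutrality (FilterRule F (A := A)) ∧
    Monotonicity (FilterRule F (A := A)) ∧
    IIA (FilterRule F (A := A)) ∧
    (∀ J : Set I, Decisive (FilterRule F (A := A)) J ↔ J ∈ F) ∧
    (∀ J : Set I, SDecisive (FilterRule F (A := A)) J ↔ J ∈ F) ∧
    ((F = ⊥ ∨ ∃ U : Ultrafilter I, F = ↑U) →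
      ∀ P : I → A → A → Prop, IsLPOProfile P → IsLPO (FilterRule F P)) := by
  obtain ⟨a, b, -, hab, -, -⟩ := hA
  refine ⟨fun _ => FilterRule.isPPO, FilterRule.unanimity, FilterRule.neutrality,
    FilterRule.monotonicity, FilterRule.iia, fun J => ?_, fun J => ?_, ?_⟩
  · exact ⟨FilterRule.mem_of_decisive hab, fun hJ => (FilterRule.sDecisive_of_mem hJ).decisive⟩
  · exact ⟨fun hJ => FilterRule.mem_of_decisive hab hJ.decisive, FilterRule.sDecisive_of_mem⟩
  · rintro (rfl | ⟨U, rfl⟩) P hP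
    · exact FilterRule.isLPO_bot P
    · exact FilterRule.isLPO_ultrafilter U hP
end
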